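/- For any normalized Hochschild (2n−1)-cochain γ of the Weyl algebra A_n with values in the dual bimodule A_n* (right action twisted by the parity automorphism), the coboundary evaluated on the antisymmetrized chain y^1∧⋯∧y^{2n} equals (∂γ)(y^1∧⋯∧y^{2n}) = 2 Σ_{k=1}^{2n} (−1)^{k+1} y^k · γ(y^1∧⋯∧ŷ^k∧⋯∧y^{2n}), where the product with y^k is ordinary multiplication of power series; in particular (∂γ)(y^1∧⋯∧y^{2n}) vanishes at y = 0. -/

import Mathlib

open MvPolynomial

/-! The polynomial Weyl algebra `A_N = ℂ[y^1,…,y^N]` with Moyal star product,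
its dual module `A_N* = ℂ[[y^1,…,y^N]]` with left Moyal action and right Moyal
action twisted by the parity automorphism, and the Hochschild differential. -/

variable (N : ℕ)

/-- The single-contraction bidifferential operator `Σ π^{jk} ∂_{y^j} ⊗ ∂_{y^k}`
on polynomials in a doubled set of variables. -/
noncomputable def moyalStep (π : Matrix (Fin N) (Fin N) ℂ) :
    Module.End ℂ (MvPolynomial (Fin N ⊕ Fin N) ℂ) :=
  ∑ j : Fin N, ∑ k : Fin N,
    π j k • ((pderiv (Sum.inl j)).toLinearMap ∘ₗ (pderiv (Sum.inr k)).toLinearMap)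

/-- The Moyal star product on the polynomial Weyl algebra. -/
noncomputable def moyal (π : Matrix (Fin N) (Fin N) ℂ)
    (a b : MvPolynomial (Fin N) ℂ) : MvPolynomial (Fin N) ℂ :=
  ∑ m ∈ Finset.range (a.totalDegree + 1),
    ((Complex.I ^ m) / (m.factorial : ℂ)) •
      (rename (Sum.elim id id))
        (((moyalStep N π) ^ m) (rename Sum.inl a * rename Sum.inr b))

/-- The parity automorphism `a(y) ↦ a(-y)` of the polynomial algebra. -/
noncomputable def parityMap :
    MvPolynomial (Fin N) ℂ →ₐ[ℂ] MvPolynomial (Fin N) ℂ :=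
  aeval fun j => -(X j)

/-- Partial derivative on formal power series in doubled variables. -/
noncomputable def pdT (v : Fin N ⊕ Fin N)
    (g : MvPowerSeries (Fin N ⊕ Fin N) ℂ) : MvPowerSeries (Fin N ⊕ Fin N) ℂ :=
  fun e => ((e v : ℂ) + 1) * g (e + Finsupp.single v 1)

/-- The single-contraction operator on power series in doubled variables. -/
noncomputable def stepT (π : Matrix (Fin N) (Fin N) ℂ)
    (g : MvPowerSeries (Fin N ⊕ Fin N) ℂ) : MvPowerSeries (Fin N ⊕ Fin N) ℂ :=
  fun e => ∑ j : Fin N, ∑ k : Fin N,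
    π j k * pdT N (Sum.inl j) (pdT N (Sum.inr k) g) e

open scoped Classical in
/-- A power series in `y` placed in the left (`Sum.inl`) copy of the doubled
variables. -/
noncomputable def embL (f : MvPowerSeries (Fin N) ℂ) :
    MvPowerSeries (Fin N ⊕ Fin N) ℂ :=
  fun e => if ∀ v, e (Sum.inr v) = 0
    then f (Finsupp.comapDomain Sum.inl e Sum.inl_injective.injOn) else 0

open scoped Classical in
/-- A power series in `y` placed in the right (`Sum.inr`) copy of the doubled
variables. -/
noncomputable def embR (f : MvPowerSeries (Fin N) ℂ) :
    MvPowerSeries (Fin N ⊕ Fin N) ℂ :=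
  fun e => if ∀ v, e (Sum.inl v) = 0
    then f (Finsupp.comapDomain Sum.inr e Sum.inr_injective.injOn) else 0

/-- Identify the two copies of the variables (the multiplication map). -/
noncomputable def collapseT (g : MvPowerSeries (Fin N ⊕ Fin N) ℂ) :
    MvPowerSeries (Fin N) ℂ :=
  fun e => ∑ p ∈ Finset.HasAntidiagonal.antidiagonal e,
    g (Finsupp.mapDomain Sum.inl p.1 + Finsupp.mapDomain Sum.inr p.2)

/-- Left Moyal action `a ∗ f` of a polynomial `a` on a formal power series `f`;
the exponential series truncates at `totalDegree a`. -/
noncomputable def leftStar (π : Matrix (Fin N) (Fin N) ℂ)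
    (a : MvPolynomial (Fin N) ℂ) (f : MvPowerSeries (Fin N) ℂ) :
    MvPowerSeries (Fin N) ℂ :=
  ∑ m ∈ Finset.range (a.totalDegree + 1),
    ((Complex.I ^ m) / (m.factorial : ℂ)) •
      collapseT N ((stepT N π)^[m]
        (((rename Sum.inl a : MvPolynomial (Fin N ⊕ Fin N) ℂ) :
            MvPowerSeries (Fin N ⊕ Fin N) ℂ) * embR N f))

/-- Right Moyal action `f ∗ a` of a polynomial `a` on a formal power series `f`. -/
noncomputable def rightStar (π : Matrix (Fin N) (Fin N) ℂ)
    (f : MvPowerSeries (Fin N) ℂ) (a : MvPolynomial (Fin N) ℂ) :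
    MvPowerSeries (Fin N) ℂ :=
  ∑ m ∈ Finset.range (a.totalDegree + 1),
    ((Complex.I ^ m) / (m.factorial : ℂ)) •
      collapseT N ((stepT N π)^[m]
        (embL N f * ((rename Sum.inr a : MvPolynomial (Fin N ⊕ Fin N) ℂ) :
            MvPowerSeries (Fin N ⊕ Fin N) ℂ)))

/-- Multiplication by `y^k` (ordinary commutative multiplication) on power series. -/
noncomputable def mulY (k : Fin N) (f : MvPowerSeries (Fin N) ℂ) :
    MvPowerSeries (Fin N) ℂ :=
  fun e => if 1 ≤ e k then f (e - Finsupp.single k 1) else 0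

/-- The Hochschild differential for cochains of the Weyl algebra `A_N` with
values in the dual module `A_N* = ℂ[[y]]` (left Moyal action, right Moyal
action twisted by the parity automorphism `ã(y) = a(-y)`). -/
noncomputable def hochD (π : Matrix (Fin N) (Fin N) ℂ) {p : ℕ}
    (γ : MultilinearMap ℂ (fun _ : Fin p => MvPolynomial (Fin N) ℂ)
      (MvPowerSeries (Fin N) ℂ)) :
    (Fin (p + 1) → MvPolynomial (Fin N) ℂ) → MvPowerSeries (Fin N) ℂ :=
  fun a =>
    leftStar N π (a 0) (γ fun i => a i.succ) +
    ∑ j : Fin p, ((-1 : ℤ) ^ (j : ℕ)) •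
      γ (fun m : Fin p =>
        if (m : ℕ) < (j : ℕ) then a m.castSucc
        else if (m : ℕ) = (j : ℕ) then moyal N π (a m.castSucc) (a m.succ)
        else a m.succ) +
    ((-1 : ℤ) ^ (p + 1)) •
      rightStar N π (γ fun i => a i.castSucc) (parityMap N (a (Fin.last p)))

/-- A cochain is normalized if it vanishes whenever one of its arguments is `1`. -/
def IsNormalized {p : ℕ}
    (γ : MultilinearMap ℂ (fun _ : Fin p => MvPolynomial (Fin N) ℂ)
      (MvPowerSeries (Fin N) ℂ)) : Prop :=
  ∀ v, (∃ i, v i = 1) → γ v = 0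

/-- Evaluation of a `N`-ary function on the antisymmetrized chain
`y^1 ∧ ⋯ ∧ y^N`. -/
noncomputable def wedgeEval
    (F : (Fin N → MvPolynomial (Fin N) ℂ) → MvPowerSeries (Fin N) ℂ) :
    MvPowerSeries (Fin N) ℂ :=
  ∑ σ : Equiv.Perm (Fin N), (Equiv.Perm.sign σ : ℤ) • F fun m => X (σ m)

/-! Evaluate `∂γ` on `y^{σ 0}, …, y^{σ (2n-1)}` and sum against `sign σ`. The inner faces cancel
in pairs: swapping two adjacent generators changes the Moyal product in that slot by the scalar
`2 i π^{ab}`, which a normalized cochain does not see. Rotating the arguments cyclically puts the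
right face next to the left one with the opposite sign, so each permutation contributes
`y^k ∗ f - f ∗ ỹ^k = y^k ∗ f + f ∗ y^k = 2 y^k f`, the first-order Moyal terms cancelling because
`π` is antisymmetric. Grouping the permutations by their value at `0` gives the formula.

In the doubled variables, `embL g * embR f` plays the role of `g ⊗ f`: `stepT` acts on it as
`∑ π j k ∂_j ⊗ ∂_k` and `collapseT` multiplies it out, so for `a` of degree one the Moyal actions
stop at first order. -/

namespace Equiv.Perm

variable {M : Type*} [AddCommGroup M]

lemma sum_sign_smul_comp_mul_right {α : Type*} [Fintype α] [DecidableEq α] (ρ : Perm α)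
    (F : Perm α → M) :
    ∑ σ : Perm α, (sign σ : ℤ) • F (σ * ρ) = (sign ρ : ℤ) • ∑ σ : Perm α, (sign σ : ℤ) • F σ := by
  rw [Finset.smul_sum,
    ← _root_.Equiv.sum_comp (Equiv.mulRight ρ) fun σ => (sign ρ : ℤ) • (sign σ : ℤ) • F σ]
  refine Finset.sum_congr rfl fun σ _ => ?_
  rw [coe_mulRight, smul_smul, map_mul, Units.val_mul, mul_left_comm, Int.units_coe_mul_self,
    mul_one]

lemma sum_sign_smul_eq_zero_of_mul_swap {α : Type*} [Fintype α] [DecidableEq α] {i j : α}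
    (hij : i ≠ j) (F : Perm α → M) (hF : ∀ σ, F (σ * swap i j) = F σ) :
    ∑ σ : Perm α, (sign σ : ℤ) • F σ = 0 :=
  Finset.sum_involution (fun σ _ => σ * swap i j)
    (fun σ _ => by rw [hF, map_mul, sign_swap hij]; simp)
    (fun σ _ _ => mul_ne_left.mpr fun h => hij (swap_eq_refl_iff.mp h))
    (fun _ _ => Finset.mem_univ _)
    (fun σ _ => by rw [mul_assoc, swap_mul_self, mul_one])

lemma sum_sign_smul_castSucc_last (n : ℕ) (F : (Fin n → Fin (n + 1)) → Fin (n + 1) → M) :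
    ∑ σ : Perm (Fin (n + 1)), (sign σ : ℤ) • F (σ ∘ Fin.castSucc) (σ (Fin.last n)) =
      (-1 : ℤ) ^ n • ∑ σ : Perm (Fin (n + 1)), (sign σ : ℤ) • F (σ ∘ Fin.succ) (σ 0) := by
  have h := sum_sign_smul_comp_mul_right (finRotate (n + 1))
    fun σ => F (σ ∘ Fin.castSucc) (σ (Fin.last n))
  have hrot : finRotate (n + 1) ∘ Fin.castSucc = Fin.succ :=
    funext fun i => by simp [finRotate_apply, Fin.coeSucc_eq_succ]
  simp only [coe_mul, Function.comp_assoc, hrot, Function.comp_apply, finRotate_last,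
    sign_finRotate, Nat.add_sub_cancel] at h
  rw [h, smul_smul]
  push_cast
  rw [← mul_pow, neg_one_mul, neg_neg, one_pow, one_smul]

lemma sum_sign_smul_zero_succ (n : ℕ) (F : Fin (n + 1) → (Fin n → Fin (n + 1)) → M) :
    ∑ σ : Perm (Fin (n + 1)), (sign σ : ℤ) • F (σ 0) (σ ∘ Fin.succ) =
      ∑ k : Fin (n + 1), (-1 : ℤ) ^ (k : ℕ) •
        ∑ τ : Perm (Fin n), (sign τ : ℤ) • F k (k.succAbove ∘ τ) := by
  set φ : Fin (n + 1) × Perm (Fin n) → Perm (Fin (n + 1)) :=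
    fun kτ => (Fin.cycleRange kτ.1).symm * decomposeFin.symm (0, kτ.2) with hφ
  have hzero : ∀ k τ, φ (k, τ) 0 = k := fun k τ => by
    simp [hφ, Fin.cycleRange_symm_zero]
  have hsucc : ∀ k τ, φ (k, τ) ∘ Fin.succ = k.succAbove ∘ τ := fun k τ => funext fun i => by
    simp [hφ, Fin.cycleRange_symm_succ]
  have hsign : ∀ k τ, (sign (φ (k, τ)) : ℤ) = (-1) ^ (k : ℕ) * sign τ := fun k τ => by
    simp [hφ, Fin.sign_cycleRange]
  have hbij : Function.Bijective φ := by
    refine (Fintype.bijective_iff_injective_and_card φ).mpr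
      ⟨?_, by simp [Fintype.card_perm, Nat.factorial_succ]⟩
    rintro ⟨k, τ⟩ ⟨k', τ'⟩ h
    obtain rfl : k = k' := by rw [← hzero k τ, ← hzero k' τ', h]
    have hτ : k.succAbove ∘ τ = k.succAbove ∘ τ' := by rw [← hsucc, ← hsucc, h]
    exact Prod.ext rfl (Equiv.ext fun i => Fin.succAbove_right_injective (congrFun hτ i))
  rw [← Fintype.sum_bijective φ hbij
    (fun kτ => ((-1 : ℤ) ^ (kτ.1 : ℕ) * sign kτ.2) • F kτ.1 (kτ.1.succAbove ∘ kτ.2)) _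
    fun ⟨k, τ⟩ => by rw [hsign, hzero, hsucc], Fintype.sum_prod_type]
  simp only [mul_smul, Finset.smul_sum]

end Equiv.Perm

namespace WeylDual

open Finsupp Equiv Equiv.Perm

variable {N : ℕ}

lemma exists_eq_sumElim (E : (Fin N ⊕ Fin N) →₀ ℕ) : ∃ P Q, E = sumElim P Q :=
  ⟨_, _, (comapDomain_sumElim_comapDomain E).symm⟩

lemma sumElim_injective {P Q P' Q' : Fin N →₀ ℕ} (h : sumElim P Q = sumElim P' Q') :
    P = P' ∧ Q = Q' :=
  Prod.mk.inj (sumFinsuppEquivProdFinsupp.symm.injective h)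

lemma coeff_sumElim_embL (g : MvPowerSeries (Fin N) ℂ) (P Q : Fin N →₀ ℕ) :
    MvPowerSeries.coeff (sumElim P Q) (embL N g) =
      if Q = 0 then MvPowerSeries.coeff P g else 0 := by
  change embL N g _ = if Q = 0 then g P else 0
  simp only [embL, sumElim_inr, comapDomain_inl_sumElim,
    Finsupp.ext_iff, Finsupp.coe_zero, Pi.zero_apply]

lemma coeff_sumElim_embR (f : MvPowerSeries (Fin N) ℂ) (P Q : Fin N →₀ ℕ) :
    MvPowerSeries.coeff (sumElim P Q) (embR N f) =
      if P = 0 then MvPowerSeries.coeff Q f else 0 := by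
  change embR N f _ = if P = 0 then f Q else 0
  simp only [embR, sumElim_inl, comapDomain_inr_sumElim,
    Finsupp.ext_iff, Finsupp.coe_zero, Pi.zero_apply]

lemma coeff_sumElim_embL_mul_embR (g f : MvPowerSeries (Fin N) ℂ) (P Q : Fin N →₀ ℕ) :
    MvPowerSeries.coeff (sumElim P Q) (embL N g * embR N f) =
      MvPowerSeries.coeff P g * MvPowerSeries.coeff Q f := by
  have hmem : (sumElim P 0, sumElim 0 Q) ∈ Finset.HasAntidiagonal.antidiagonal (sumElim P Q) := by
    rw [Finset.HasAntidiagonal.mem_antidiagonal, ← sumElim_add, add_zero, zero_add]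
  rw [MvPowerSeries.coeff_mul, Finset.sum_eq_single_of_mem _ hmem, coeff_sumElim_embL,
    coeff_sumElim_embR, if_pos rfl, if_pos rfl]
  rintro ⟨A, B⟩ hAB hne
  obtain ⟨A₁, A₂, rfl⟩ := exists_eq_sumElim A
  obtain ⟨B₁, B₂, rfl⟩ := exists_eq_sumElim B
  rw [coeff_sumElim_embL, coeff_sumElim_embR]
  split_ifs with hA hB
  · subst hA hB
    rw [Finset.HasAntidiagonal.mem_antidiagonal, ← sumElim_add, add_zero, zero_add] at hAB
    obtain ⟨rfl, rfl⟩ := sumElim_injective hAB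
    exact absurd rfl hne
  all_goals simp

lemma pdT_inl_embL_mul_embR (j : Fin N) (g f : MvPowerSeries (Fin N) ℂ) :
    pdT N (Sum.inl j) (embL N g * embR N f) = embL N (MvPowerSeries.pderiv ℂ j g) * embR N f := by
  ext E
  obtain ⟨P, Q, rfl⟩ := exists_eq_sumElim E
  change _ * MvPowerSeries.coeff _ (embL N g * embR N f) = _
  rw [← sumElim_single_zero, ← sumElim_add, add_zero, coeff_sumElim_embL_mul_embR,
    coeff_sumElim_embL_mul_embR, sumElim_inl, MvPowerSeries.coeff_pderiv]
  ring

lemma pdT_inr_embL_mul_embR (k : Fin N) (g f : MvPowerSeries (Fin N) ℂ) :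
    pdT N (Sum.inr k) (embL N g * embR N f) = embL N g * embR N (MvPowerSeries.pderiv ℂ k f) := by
  ext E
  obtain ⟨P, Q, rfl⟩ := exists_eq_sumElim E
  change _ * MvPowerSeries.coeff _ (embL N g * embR N f) = _
  rw [← sumElim_zero_single, ← sumElim_add, add_zero, coeff_sumElim_embL_mul_embR,
    coeff_sumElim_embL_mul_embR, sumElim_inr, MvPowerSeries.coeff_pderiv]
  ring

lemma stepT_embL_mul_embR (π : Matrix (Fin N) (Fin N) ℂ) (g f : MvPowerSeries (Fin N) ℂ) :
    stepT N π (embL N g * embR N f) =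
      ∑ j, ∑ k, π j k •
        (embL N (MvPowerSeries.pderiv ℂ j g) * embR N (MvPowerSeries.pderiv ℂ k f)) := by
  ext E
  simp only [map_sum, MvPowerSeries.coeff_smul]
  change ∑ j, ∑ k, π j k * MvPowerSeries.coeff E (pdT N _ (pdT N _ _)) = _
  simp only [pdT_inr_embL_mul_embR, pdT_inl_embL_mul_embR]

noncomputable def collapseLinearMap (N : ℕ) :
    MvPowerSeries (Fin N ⊕ Fin N) ℂ →ₗ[ℂ] MvPowerSeries (Fin N) ℂ where
  toFun := collapseT N
  map_add' _ _ := funext fun _ => Finset.sum_add_distrib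
  map_smul' _ _ := funext fun _ => (Finset.mul_sum _ _ _).symm

lemma collapseT_embL_mul_embR (g f : MvPowerSeries (Fin N) ℂ) :
    collapseT N (embL N g * embR N f) = g * f := by
  ext e
  rw [MvPowerSeries.coeff_mul]
  refine Finset.sum_congr rfl fun p _ => ?_
  rw [← sumElim_eq_add]
  exact coeff_sumElim_embL_mul_embR g f p.1 p.2

lemma coe_rename_inl (a : MvPolynomial (Fin N) ℂ) :
    ((rename Sum.inl a : MvPolynomial (Fin N ⊕ Fin N) ℂ) : MvPowerSeries (Fin N ⊕ Fin N) ℂ) =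
      embL N a := by
  ext E
  obtain ⟨P, Q, rfl⟩ := exists_eq_sumElim E
  rw [coeff_sumElim_embL, MvPolynomial.coeff_coe, MvPolynomial.coeff_coe]
  split_ifs with hQ
  · rw [hQ, sumElim_eq_add, mapDomain_zero, add_zero,
      coeff_rename_mapDomain _ Sum.inl_injective]
  · refine coeff_rename_eq_zero _ _ _ fun u hu => absurd ?_ hQ
    rw [← add_zero (mapDomain _ u), ← mapDomain_zero (f := Sum.inr), ← sumElim_eq_add] at hu
    exact (sumElim_injective hu).2.symm

lemma coe_rename_inr (a : MvPolynomial (Fin N) ℂ) :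
    ((rename Sum.inr a : MvPolynomial (Fin N ⊕ Fin N) ℂ) : MvPowerSeries (Fin N ⊕ Fin N) ℂ) =
      embR N a := by
  ext E
  obtain ⟨P, Q, rfl⟩ := exists_eq_sumElim E
  rw [coeff_sumElim_embR, MvPolynomial.coeff_coe, MvPolynomial.coeff_coe]
  split_ifs with hP
  · rw [hP, sumElim_eq_add, mapDomain_zero, zero_add,
      coeff_rename_mapDomain _ Sum.inr_injective]
  · refine coeff_rename_eq_zero _ _ _ fun u hu => absurd ?_ hP
    rw [← zero_add (mapDomain _ u), ← mapDomain_zero (f := Sum.inl), ← sumElim_eq_add] at hu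
    exact (sumElim_injective hu).1.symm

lemma collapseLinearMap_apply (G : MvPowerSeries (Fin N ⊕ Fin N) ℂ) :
    collapseLinearMap N G = collapseT N G := rfl

lemma collapseT_stepT_embL_mul_embR (π : Matrix (Fin N) (Fin N) ℂ)
    (g f : MvPowerSeries (Fin N) ℂ) :
    collapseT N (stepT N π (embL N g * embR N f)) =
      ∑ j, ∑ k, π j k • (MvPowerSeries.pderiv ℂ j g * MvPowerSeries.pderiv ℂ k f) := by
  simp only [stepT_embL_mul_embR, ← collapseLinearMap_apply, map_sum, map_smul]
  simp only [collapseLinearMap_apply, collapseT_embL_mul_embR]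

lemma leftStar_of_totalDegree_eq_one (π : Matrix (Fin N) (Fin N) ℂ)
    {a : MvPolynomial (Fin N) ℂ} (ha : a.totalDegree = 1) (f : MvPowerSeries (Fin N) ℂ) :
    leftStar N π a f = a * f + Complex.I • ∑ j, ∑ k,
      π j k • (MvPowerSeries.pderiv ℂ j (a : MvPowerSeries (Fin N) ℂ) *
        MvPowerSeries.pderiv ℂ k f) := by
  simp [leftStar, ha, Finset.sum_range_succ, coe_rename_inl, collapseT_embL_mul_embR,
    collapseT_stepT_embL_mul_embR]

lemma rightStar_of_totalDegree_eq_one (π : Matrix (Fin N) (Fin N) ℂ)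
    (f : MvPowerSeries (Fin N) ℂ) {a : MvPolynomial (Fin N) ℂ} (ha : a.totalDegree = 1) :
    rightStar N π f a = f * a + Complex.I • ∑ j, ∑ k,
      π j k • (MvPowerSeries.pderiv ℂ j f *
        MvPowerSeries.pderiv ℂ k (a : MvPowerSeries (Fin N) ℂ)) := by
  simp [rightStar, ha, Finset.sum_range_succ, coe_rename_inr, collapseT_embL_mul_embR,
    collapseT_stepT_embL_mul_embR]

lemma leftStar_X_sub_rightStar_parityMap_X (π : Matrix (Fin N) (Fin N) ℂ)
    (hanti : π.transpose = -π) (k : Fin N) (f : MvPowerSeries (Fin N) ℂ) :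
    leftStar N π (X k) f - rightStar N π f (parityMap N (X k)) =
      (2 : ℂ) • (MvPowerSeries.X k * f) := by
  have hπ : ∀ j, π j k = -π k j := fun j => by simpa using congrFun (congrFun hanti k) j
  have hneg : ((-X k : MvPolynomial (Fin N) ℂ) : MvPowerSeries (Fin N) ℂ) =
      -MvPowerSeries.X k := by
    rw [← coeToMvPowerSeries.ringHom_apply, map_neg, coeToMvPowerSeries.ringHom_apply, coe_X]
  rw [parityMap, aeval_X, leftStar_of_totalDegree_eq_one π (totalDegree_X k),
    rightStar_of_totalDegree_eq_one π f (by rw [totalDegree_neg, totalDegree_X])]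
  simp only [hneg, coe_X, map_neg, MvPowerSeries.pderiv_X, Pi.single_apply, mul_neg, neg_mul,
    mul_ite, ite_mul, one_mul, zero_mul, mul_one, mul_zero, smul_neg, smul_ite, smul_zero,
    Finset.sum_ite_irrel, Finset.sum_const_zero, Finset.sum_ite_eq, Finset.mem_univ, if_true,
    Finset.sum_neg_distrib, hπ, neg_smul, mul_comm f]
  module

lemma mulY_eq_X_mul (k : Fin N) (f : MvPowerSeries (Fin N) ℂ) :
    mulY N k f = MvPowerSeries.X k * f := by
  ext e
  rw [MvPowerSeries.X, MvPowerSeries.coeff_monomial_mul, one_mul]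
  simp only [single_le_iff]
  rfl

lemma moyal_X_X (π : Matrix (Fin N) (Fin N) ℂ) (a b : Fin N) :
    moyal N π (X a) (X b) = X a * X b + (Complex.I * π a b) • 1 := by
  simp [moyal, Finset.sum_range_succ, moyalStep, pderiv_X, Pi.single_apply, apply_ite,
    smul_smul]

lemma IsNormalized.map_update_eq_of_sub_eq_smul_one {p : ℕ}
    {γ : MultilinearMap ℂ (fun _ : Fin p => MvPolynomial (Fin N) ℂ) (MvPowerSeries (Fin N) ℂ)}
    (hγ : IsNormalized N γ) (v : Fin p → MvPolynomial (Fin N) ℂ) (j : Fin p)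
    {x y : MvPolynomial (Fin N) ℂ} (c : ℂ) (h : x - y = c • 1) :
    γ (Function.update v j x) = γ (Function.update v j y) := by
  rw [← sub_eq_zero, ← γ.map_update_sub, h, γ.map_update_smul,
    hγ _ ⟨j, Function.update_self _ _ _⟩, smul_zero]

lemma moyal_X_sub_moyal_X (π : Matrix (Fin N) (Fin N) ℂ) (hanti : π.transpose = -π)
    (a b : Fin N) :
    moyal N π (X a) (X b) - moyal N π (X b) (X a) = (2 * Complex.I * π a b) • 1 := by
  have hπ : π b a = -π a b := by simpa using congrFun (congrFun hanti a) b
  rw [moyal_X_X, moyal_X_X, hπ, mul_comm (X b)]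
  module

def innerFaceArgs {A : Type*} (μ : A → A → A) {p : ℕ} (a : Fin (p + 1) → A) (j : Fin p) :
    Fin p → A :=
  fun m => if (m : ℕ) < (j : ℕ) then a m.castSucc
    else if (m : ℕ) = (j : ℕ) then μ (a m.castSucc) (a m.succ) else a m.succ

lemma innerFaceArgs_self {A : Type*} (μ : A → A → A) {p : ℕ} (a : Fin (p + 1) → A)
    (j : Fin p) : innerFaceArgs μ a j j = μ (a j.castSucc) (a j.succ) := by
  simp [innerFaceArgs]

lemma innerFaceArgs_comp_swap {A : Type*} (μ : A → A → A) {p : ℕ} (a : Fin (p + 1) → A)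
    (j : Fin p) :
    innerFaceArgs μ (a ∘ swap j.castSucc j.succ) j =
      Function.update (innerFaceArgs μ a j) j (μ (a j.succ) (a j.castSucc)) := by
  funext m
  rcases lt_trichotomy (m : ℕ) j with hlt | heq | hgt
  · have hm : m ≠ j := fun h => hlt.ne (congrArg Fin.val h)
    simp only [innerFaceArgs, Function.comp_apply, Function.update_of_ne hm, if_pos hlt]
    rw [swap_apply_of_ne_of_ne (Fin.ne_of_val_ne (by simp; omega))
      (Fin.ne_of_val_ne (by simp; omega))]
  · obtain rfl := Fin.ext heq
    simp [innerFaceArgs]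
  · have hm : m ≠ j := fun h => hgt.ne' (congrArg Fin.val h)
    simp only [innerFaceArgs, Function.comp_apply, Function.update_of_ne hm, if_neg (lt_asymm hgt),
      if_neg hgt.ne']
    rw [swap_apply_of_ne_of_ne (Fin.ne_of_val_ne (by simp; omega))
      (Fin.ne_of_val_ne (by simp; omega))]

lemma hochD_apply (π : Matrix (Fin N) (Fin N) ℂ) {p : ℕ}
    (γ : MultilinearMap ℂ (fun _ : Fin p => MvPolynomial (Fin N) ℂ) (MvPowerSeries (Fin N) ℂ))
    (a : Fin (p + 1) → MvPolynomial (Fin N) ℂ) :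
    hochD N π γ a = leftStar N π (a 0) (γ fun i => a i.succ) +
      ∑ j : Fin p, ((-1 : ℤ) ^ (j : ℕ)) • γ (innerFaceArgs (moyal N π) a j) +
      ((-1 : ℤ) ^ (p + 1)) •
        rightStar N π (γ fun i => a i.castSucc) (parityMap N (a (Fin.last p))) := rfl

lemma sum_sign_smul_innerFaceArgs_eq_zero {p : ℕ} (π : Matrix (Fin (p + 1)) (Fin (p + 1)) ℂ)
    (hanti : π.transpose = -π)
    {γ : MultilinearMap ℂ (fun _ : Fin p => MvPolynomial (Fin (p + 1)) ℂ)
      (MvPowerSeries (Fin (p + 1)) ℂ)}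
    (hγ : IsNormalized (p + 1) γ) (j : Fin p) :
    ∑ σ : Perm (Fin (p + 1)), (sign σ : ℤ) •
      γ (innerFaceArgs (moyal (p + 1) π) (fun i => X (σ i)) j) = 0 := by
  refine sum_sign_smul_eq_zero_of_mul_swap (Fin.castSucc_lt_succ (i := j)).ne _ fun σ => ?_
  change γ (innerFaceArgs _ ((fun i => X (σ i)) ∘ swap _ _) j) = _
  rw [innerFaceArgs_comp_swap, ← IsNormalized.map_update_eq_of_sub_eq_smul_one hγ _ j _
      (moyal_X_sub_moyal_X π hanti _ _), ← innerFaceArgs_self (moyal (p + 1) π) (fun i => X (σ i)),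
    Function.update_eq_self]

lemma wedgeEval_hochD_eq_sum_outer {p : ℕ} (π : Matrix (Fin (p + 1)) (Fin (p + 1)) ℂ)
    (hanti : π.transpose = -π)
    (γ : MultilinearMap ℂ (fun _ : Fin p => MvPolynomial (Fin (p + 1)) ℂ)
      (MvPowerSeries (Fin (p + 1)) ℂ))
    (hγ : IsNormalized (p + 1) γ) :
    wedgeEval (p + 1) (hochD (p + 1) π γ) =
      ∑ σ : Perm (Fin (p + 1)), (sign σ : ℤ) •
        (leftStar (p + 1) π (X (σ 0)) (γ fun i => X (σ i.succ)) -
          rightStar (p + 1) π (γ fun i => X (σ i.succ)) (parityMap (p + 1) (X (σ 0)))) := by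
  have hinner : ∑ σ : Perm (Fin (p + 1)), (sign σ : ℤ) • ∑ j : Fin p, ((-1 : ℤ) ^ (j : ℕ)) •
      γ (innerFaceArgs (moyal (p + 1) π) (fun i => X (σ i)) j) = 0 := by
    simp only [Finset.smul_sum, smul_comm (sign _ : ℤ) ((-1 : ℤ) ^ _)]
    rw [Finset.sum_comm]
    simp only [← Finset.smul_sum, sum_sign_smul_innerFaceArgs_eq_zero π hanti hγ, smul_zero,
      Finset.sum_const_zero]
  have hright : ∑ σ : Perm (Fin (p + 1)), (sign σ : ℤ) • ((-1 : ℤ) ^ (p + 1)) •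
      rightStar (p + 1) π (γ fun i => X (σ i.castSucc)) (parityMap (p + 1) (X (σ (Fin.last p)))) =
      -∑ σ : Perm (Fin (p + 1)), (sign σ : ℤ) •
        rightStar (p + 1) π (γ fun i => X (σ i.succ)) (parityMap (p + 1) (X (σ 0))) := by
    simp only [smul_comm (sign _ : ℤ) ((-1 : ℤ) ^ (p + 1))]
    have hrot := sum_sign_smul_castSucc_last p
      fun v k => rightStar (p + 1) π (γ fun i => X (v i)) (parityMap (p + 1) (X k))
    simp only [Function.comp_apply] at hrot
    rw [← Finset.smul_sum, hrot, smul_smul, ← pow_add, Odd.neg_one_pow ⟨p, by ring⟩, neg_one_smul]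
  simp only [wedgeEval, hochD_apply, smul_add, Finset.sum_add_distrib, hinner, add_zero, hright,
    smul_sub, Finset.sum_sub_distrib, ← sub_eq_add_neg]

lemma wedgeEval_hochD_eq {p : ℕ} (π : Matrix (Fin (p + 1)) (Fin (p + 1)) ℂ)
    (hanti : π.transpose = -π)
    (γ : MultilinearMap ℂ (fun _ : Fin p => MvPolynomial (Fin (p + 1)) ℂ)
      (MvPowerSeries (Fin (p + 1)) ℂ))
    (hγ : IsNormalized (p + 1) γ) :
    wedgeEval (p + 1) (hochD (p + 1) π γ) =
      (2 : ℂ) • ∑ k : Fin (p + 1), ((-1 : ℤ) ^ (k : ℕ)) •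
        mulY (p + 1) k (∑ τ : Perm (Fin p), (sign τ : ℤ) • γ fun r => X (k.succAbove (τ r))) := by
  have hsplit := sum_sign_smul_zero_succ p
    fun k v => (2 : ℂ) • (MvPowerSeries.X k * γ fun i => X (v i))
  simp only [Function.comp_apply] at hsplit
  rw [wedgeEval_hochD_eq_sum_outer π hanti γ hγ]
  simp only [leftStar_X_sub_rightStar_parityMap_X π hanti]
  rw [hsplit]
  simp only [mulY_eq_X_mul, Finset.mul_sum, mul_smul_comm, Finset.smul_sum, smul_comm (2 : ℂ)]

end WeylDual

theorem coboundary_on_wedge_general (m : ℕ)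
    (π : Matrix (Fin (2 * m + 2)) (Fin (2 * m + 2)) ℂ)
    (hanti : π.transpose = -π)
    (γ : MultilinearMap ℂ
      (fun _ : Fin (2 * m + 1) => MvPolynomial (Fin (2 * m + 2)) ℂ)
      (MvPowerSeries (Fin (2 * m + 2)) ℂ))
    (hγ : IsNormalized (2 * m + 2) γ) :
    wedgeEval (2 * m + 2) (hochD (2 * m + 2) π γ) =
      (2 : ℂ) • ∑ k : Fin (2 * m + 2), ((-1 : ℤ) ^ (k : ℕ)) •
        mulY (2 * m + 2) k
          (∑ σ : Equiv.Perm (Fin (2 * m + 1)), (Equiv.Perm.sign σ : ℤ) •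
            γ fun r => MvPolynomial.X (k.succAbove (σ r))) ∧
    MvPowerSeries.constantCoeff (σ := Fin (2 * m + 2)) (R := ℂ)
      (wedgeEval (2 * m + 2) (hochD (2 * m + 2) π γ)) = 0 := by
  have h := WeylDual.wedgeEval_hochD_eq π hanti γ hγ
  exact ⟨h, by simp [h, WeylDual.mulY_eq_X_mul]⟩

/-- for any normalized Hochschild `(2n-1)`-cochain `γ` of the
Weyl algebra `A_n` (here the number of generators is `2n = 2m+2`, i.e. `n = m+1`,
so the cochain degree is `2n-1 = 2m+1`) with values in the dual bimodule, the
coboundary evaluated on the antisymmetrized chain `y^1 ∧ ⋯ ∧ y^{2n}` equals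
`2 Σ_k (-1)^{k+1} y^k · γ(y^1 ∧ ⋯ ∧ ŷ^k ∧ ⋯ ∧ y^{2n})` (ordinary multiplication
by `y^k`); in particular it vanishes at `y = 0`. -/
theorem coboundary_on_wedge (m : ℕ)
    (π : Matrix (Fin (2 * m + 2)) (Fin (2 * m + 2)) ℂ)
    (hanti : π.transpose = -π) (hnondeg : IsUnit π.det)
    (γ : MultilinearMap ℂ
      (fun _ : Fin (2 * m + 1) => MvPolynomial (Fin (2 * m + 2)) ℂ)
      (MvPowerSeries (Fin (2 * m + 2)) ℂ))
    (hγ : IsNormalized (2 * m + 2) γ) :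
    wedgeEval (2 * m + 2) (hochD (2 * m + 2) π γ) =
      (2 : ℂ) • ∑ k : Fin (2 * m + 2), ((-1 : ℤ) ^ (k : ℕ)) •
        mulY (2 * m + 2) k
          (∑ σ : Equiv.Perm (Fin (2 * m + 1)), (Equiv.Perm.sign σ : ℤ) •
            γ fun r => MvPolynomial.X (k.succAbove (σ r))) ∧
    MvPowerSeries.constantCoeff (σ := Fin (2 * m + 2)) (R := ℂ)
      (wedgeEval (2 * m + 2) (hochD (2 * m + 2) π γ)) = 0 :=
  coboundary_on_wedge_general m π hanti γ hγ
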